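/- arXiv:0709.3741 — 2 statements merged into one kernel-verified Lean document; each statement's English description precedes it below -/
import Mathlib

section
/- Let A be a unital complex *-algebra and let T be the Toeplitz *-algebra, the quotient of the free *-algebra on one generator u by the two-sided ideal generated by the self-adjoint element u*u − 1. Then A is completely positive if and only if the tensor product *-algebra A ⊗ T, with involution determined by (a ⊗ t)* = a* ⊗ t*, is positive, i.e. z*z = 0 implies z = 0 for z ∈ A ⊗ T. -/
noncomputable section FreeStarAlgebraSection

/-- Letters of the free `*`-algebra on `n` generators: `Sum.inl i` is the generator `xᵢ`
and `Sum.inr i` is its formal adjoint `xᵢ*`. -/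
abbrev FreeStarLetter (n : ℕ) : Type := Fin n ⊕ Fin n

/-- The free `*`-algebra on `n` generators: the free associative unital `ℂ`-algebra on the
`2n` generators `x₁, …, x_n, x₁*, …, x_n*`, realized as the monoid algebra over `ℂ` of the free
monoid on the corresponding `2n` letters.  The involution (defined below) is the unique
conjugate-linear anti-automorphism exchanging `xᵢ` and `xᵢ*`. -/
abbrev FreeStarAlgebra (n : ℕ) : Type := MonoidAlgebra ℂ (FreeMonoid (FreeStarLetter n))

namespace FreeStarAlgebra

variable {n : ℕ}

/-- The involution on words: reverse the word and exchange the letters `xᵢ` and `xᵢ*`. -/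
def wordStar (w : FreeMonoid (FreeStarLetter n)) : FreeMonoid (FreeStarLetter n) :=
  star (FreeMonoid.map Sum.swap w)

@[simp] theorem wordStar_mul (u v : FreeMonoid (FreeStarLetter n)) :
    wordStar (u * v) = wordStar v * wordStar u := by
  simp [wordStar, map_mul, star_mul]

@[simp] theorem wordStar_one : wordStar (1 : FreeMonoid (FreeStarLetter n)) = 1 := by
  simp [wordStar]

@[simp] theorem wordStar_of (v : FreeStarLetter n) :
    wordStar (FreeMonoid.of v) = FreeMonoid.of v.swap := by
  simp [wordStar]

@[simp] theorem wordStar_wordStar (w : FreeMonoid (FreeStarLetter n)) :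
    wordStar (wordStar w) = w := by
  induction w using FreeMonoid.recOn with
  | one => simp
  | of_mul x xs ih => simp [ih]

/-- The involution of the free `*`-algebra as an additive map:
`∑ c_w • w  ↦  ∑ conj (c_w) • w*`. -/
def starAddHom : FreeStarAlgebra n →+ FreeStarAlgebra n :=
  (Finsupp.liftAddHom fun w =>
    (MonoidAlgebra.singleAddHom (wordStar w)).comp (starAddEquiv (R := ℂ)).toAddMonoidHom).comp
    MonoidAlgebra.coeffAddEquiv.toAddMonoidHom

theorem starAddHom_single (w : FreeMonoid (FreeStarLetter n)) (c : ℂ) :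
    starAddHom (MonoidAlgebra.single w c) =
      MonoidAlgebra.single (wordStar w) (starRingEnd ℂ c) :=
  Finsupp.liftAddHom_apply_single _ _ _

instance instStarRing : StarRing (FreeStarAlgebra n) where
  star f := starAddHom f
  star_involutive f := by
    show starAddHom (starAddHom f) = f
    induction f using MonoidAlgebra.induction_linear with
    | zero => simp
    | add f g hf hg => simp [map_add, hf, hg]
    | single w c => simp [starAddHom_single]
  star_add f g := by
    show starAddHom (f + g) = starAddHom f + starAddHom g
    simp [map_add]
  star_mul f g := by
    show starAddHom (f * g) = starAddHom g * starAddHom f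
    induction f using MonoidAlgebra.induction_linear with
    | zero => simp
    | add f₁ f₂ h₁ h₂ => simp [add_mul, mul_add, map_add, h₁, h₂]
    | single w c =>
      induction g using MonoidAlgebra.induction_linear with
      | zero => simp
      | add g₁ g₂ h₁ h₂ => simp [add_mul, mul_add, map_add, h₁, h₂]
      | single w' c' =>
        rw [MonoidAlgebra.single_mul_single, starAddHom_single, starAddHom_single,
          starAddHom_single, MonoidAlgebra.single_mul_single]
        simp [wordStar, map_mul, star_mul, mul_comm]

@[simp] theorem star_single (w : FreeMonoid (FreeStarLetter n)) (c : ℂ) :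
    star (MonoidAlgebra.single w c : FreeStarAlgebra n) =
      MonoidAlgebra.single (wordStar w) (starRingEnd ℂ c) :=
  starAddHom_single w c

instance instStarModule : StarModule ℂ (FreeStarAlgebra n) where
  star_smul c f := by
    show starAddHom (c • f) = starRingEnd ℂ c • starAddHom f
    induction f using MonoidAlgebra.induction_linear with
    | zero => simp
    | add f g hf hg => simp [smul_add, map_add, hf, hg]
    | single w c' =>
      rw [MonoidAlgebra.smul_single, starAddHom_single, starAddHom_single,
        MonoidAlgebra.smul_single]
      simp [smul_eq_mul]

/-- The `i`-th generator `xᵢ` of the free `*`-algebra. -/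
def gen (n : ℕ) (i : Fin n) : FreeStarAlgebra n :=
  MonoidAlgebra.single (FreeMonoid.of (Sum.inl i)) 1

@[simp] theorem star_gen (i : Fin n) :
    star (gen n i) = MonoidAlgebra.single (FreeMonoid.of (Sum.inr i)) 1 := by
  simp [gen]

end FreeStarAlgebra
end FreeStarAlgebraSection

section Props

variable (B : Type) [Ring B] [Star B]

/-- `B` is completely positive: `x₁*x₁ + ⋯ + x_n*x_n = 0` only has the zero solution. -/
def CompletelyPositive : Prop :=
  ∀ (n : ℕ), 0 < n → ∀ f : Fin n → B, ∑ i, star (f i) * f i = 0 → ∀ i, f i = 0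

end Props

noncomputable section Toeplitz
open FreeStarAlgebra

/-- The generator `u` of the free `*`-algebra on one generator. -/
def u : FreeStarAlgebra 1 := gen 1 0

/-- The defining (self-adjoint) relation `u*u - 1` of the Toeplitz `*`-algebra. -/
def toeplitzRel : FreeStarAlgebra 1 → FreeStarAlgebra 1 → Prop := fun f g =>
  f = star u * u - 1 ∧ g = 0

theorem toeplitzRel_star : ∀ f g, toeplitzRel f g → toeplitzRel (star f) (star g) := by
  rintro f g ⟨rfl, rfl⟩
  exact ⟨by simp [star_sub, star_mul], by simp⟩

/-- The Toeplitz `*`-algebra `T = ℂ⟨u, u* | u*u = 1⟩`: the quotient of the free `*`-algebra on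
one generator `u` by the two-sided ideal generated by the self-adjoint element `u*u - 1`. -/
abbrev ToeplitzAlgebra : Type := RingQuot toeplitzRel

instance : StarRing ToeplitzAlgebra := RingQuot.starRing toeplitzRel toeplitzRel_star

theorem toeplitz_star_quot (f : FreeStarAlgebra 1) :
    star (⟨Quot.mk _ f⟩ : ToeplitzAlgebra) = ⟨Quot.mk _ (star f)⟩ :=
  rfl

instance : StarModule ℂ ToeplitzAlgebra := by
  constructor
  rintro c ⟨⟨f⟩⟩
  rw [RingQuot.smul_quot, toeplitz_star_quot, toeplitz_star_quot, star_smul,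
    ← RingQuot.smul_quot]

end Toeplitz

noncomputable section TensorStar

open scoped TensorProduct

variable (A : Type) [Ring A] [Algebra ℂ A] [StarRing A] [StarModule ℂ A]

/-- The involution on `A ⊗ T` determined by `(a ⊗ t)* = a* ⊗ t*`, as an additive map. -/
def tensorStarAddHom : A ⊗[ℂ] ToeplitzAlgebra →+ A ⊗[ℂ] ToeplitzAlgebra :=
  TensorProduct.liftAddHom
    (AddMonoidHom.mk'
      (fun (a : A) => AddMonoidHom.mk' (fun (t : ToeplitzAlgebra) => star a ⊗ₜ[ℂ] star t)
        (fun t₁ t₂ => by simp only [star_add, TensorProduct.tmul_add]))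
      (fun a₁ a₂ => by
        ext t
        simp [star_add, TensorProduct.add_tmul]))
    (fun c a t => by
      simp only [AddMonoidHom.mk'_apply, star_smul, TensorProduct.smul_tmul])

/-- The involution on the tensor product `*`-algebra `A ⊗ T`:
it is determined by `(a ⊗ t)* = a* ⊗ t*`. -/
instance : Star (A ⊗[ℂ] ToeplitzAlgebra) := ⟨tensorStarAddHom A⟩

@[simp] theorem star_tmul (a : A) (t : ToeplitzAlgebra) :
    star (a ⊗ₜ[ℂ] t) = star a ⊗ₜ[ℂ] star t :=
  TensorProduct.liftAddHom_tmul _ _ a t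

/-!
In `T`, the elements `E i j = u^i (1 - u u*) u*^j` multiply like matrix units, and the shift
representation on `ℕ →₀ ℂ` shows that the columns `E i 0` are linearly independent.

If `A ⊗ T` is positive and `∑ xᵢ* xᵢ = 0`, then `z = ∑ xᵢ ⊗ E i 0` satisfies
`z* z = (∑ xᵢ* xᵢ) ⊗ E 0 0 = 0`, so `z = 0` and every `xᵢ = 0`.

Conversely, let `A` be completely positive and `z* z = 0`. Since `T E 0 0` is spanned by the
columns, each `w = z (1 ⊗ E k 0)` is of the form `∑ aᵢ ⊗ E i 0`, and `w* w = 0` forces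
`∑ aᵢ* aᵢ = 0`, hence `w = 0`. As `T` is spanned by the words `u^i u*^j`, `z (1 ⊗ u^b)` lies in
`A ⊗ ℂ[u]` for `b` large, where right multiplication by `1 ⊗ E 0 0` is injective; so
`z (1 ⊗ u^b) = 0`, and `1 = u^b u*^b + ∑_{k<b} E k k` gives `z = 0`.
-/

open Set Submodule Filter TensorProduct

section TmulCombination

variable (R M : Type*) {N ι : Type*} [CommSemiring R] [AddCommMonoid M] [AddCommMonoid N]
  [Module R M] [Module R N]

def TensorProduct.tmulCombination (v : ι → N) : (ι →₀ M) →ₗ[R] M ⊗[R] N :=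
  Finsupp.lsum R fun i => (TensorProduct.mk R M N).flip (v i)

variable {R M}

theorem TensorProduct.tmulCombination_apply (v : ι → N) (a : ι →₀ M) :
    tmulCombination R M v a = a.sum fun i m => m ⊗ₜ v i :=
  rfl

theorem TensorProduct.tmul_mem_range_tmulCombination {v : ι → N} (m : M) {n : N}
    (hn : n ∈ span R (range v)) : m ⊗ₜ[R] n ∈ LinearMap.range (tmulCombination R M v) := by
  have : span R (range v) ≤
      (LinearMap.range (tmulCombination R M v)).comap (TensorProduct.mk R M N m) := by
    refine span_le.2 ?_
    rintro _ ⟨i, rfl⟩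
    exact ⟨Finsupp.single i m, by simp [tmulCombination_apply]⟩
  exact this hn

end TmulCombination

section TmulCombinationAlgebra

variable {R A B ι : Type*} [CommSemiring R] [Semiring A] [Algebra R A] [Semiring B] [Algebra R B]

theorem TensorProduct.tmulCombination_mul_one_tmul (v : ι → B) (a : ι →₀ A) (x : B) :
    tmulCombination R A v a * (1 ⊗ₜ x) = tmulCombination R A (fun i => v i * x) a := by
  simp [tmulCombination_apply, Finsupp.sum_mul]

theorem TensorProduct.mul_one_tmul_mem_range_tmulCombination {v : ι → B} {x : B}
    (hx : ∀ b, b * x ∈ span R (range v)) (z : A ⊗[R] B) :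
    z * (1 ⊗ₜ x) ∈ LinearMap.range (tmulCombination R A v) := by
  induction z using TensorProduct.induction_on with
  | zero => simp
  | tmul a b =>
    rw [Algebra.TensorProduct.tmul_mul_tmul, mul_one]
    exact tmul_mem_range_tmulCombination a (hx b)
  | add y z hy hz =>
    rw [add_mul]
    exact add_mem hy hz

end TmulCombinationAlgebra

theorem CompletelyPositive.eq_zero_of_sum_star_mul_self_eq_zero {B : Type} [Ring B] [Star B]
    (hB : CompletelyPositive B) {ι : Type*} {s : Finset ι} {f : ι → B}
    (hf : ∑ i ∈ s, star (f i) * f i = 0) : ∀ i ∈ s, f i = 0 := by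
  intro i hi
  let e := s.equivFin
  have hsum : ∑ k, star (f (e.symm k)) * f (e.symm k) = 0 := by
    rw [← hf, ← Finset.sum_coe_sort s]
    exact Fintype.sum_equiv e.symm _ _ fun _ => rfl
  simpa using hB s.card (Finset.card_pos.2 ⟨i, hi⟩) _ hsum (e ⟨i, hi⟩)

namespace ToeplitzAlgebra

def shift : ToeplitzAlgebra := RingQuot.mkAlgHom ℂ toeplitzRel u

theorem star_mkAlgHom (f : FreeStarAlgebra 1) :
    star (RingQuot.mkAlgHom ℂ toeplitzRel f) = RingQuot.mkAlgHom ℂ toeplitzRel (star f) := by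
  simp only [RingQuot.mkAlgHom_def, RingQuot.mkRingHom_def]
  exact toeplitz_star_quot f

theorem star_shift_mul_shift : star shift * shift = 1 := by
  have h := RingQuot.mkAlgHom_rel ℂ (s := toeplitzRel) ⟨rfl, rfl⟩
  rwa [map_sub, map_mul, map_one, map_zero, sub_eq_zero, ← star_mkAlgHom] at h

theorem star_shift_pow_mul_shift_pow_of_le {j k : ℕ} (h : j ≤ k) :
    star shift ^ j * shift ^ k = shift ^ (k - j) := by
  rw [← Nat.add_sub_cancel' h, pow_add, ← mul_assoc, pow_mul_pow_eq_one j star_shift_mul_shift,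
    one_mul, Nat.add_sub_cancel_left]

theorem star_shift_pow_mul_shift_pow_of_ge {j k : ℕ} (h : k ≤ j) :
    star shift ^ j * shift ^ k = star shift ^ (j - k) := by
  rw [← Nat.sub_add_cancel h, pow_add, mul_assoc, pow_mul_pow_eq_one k star_shift_mul_shift,
    mul_one, Nat.add_sub_cancel]

def proj : ToeplitzAlgebra := 1 - shift * star shift

theorem star_proj : star proj = proj := by
  simp [proj, star_sub, star_mul]

theorem proj_mul_shift : proj * shift = 0 := by
  rw [proj, sub_mul, one_mul, mul_assoc, star_shift_mul_shift, mul_one, sub_self]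

theorem proj_mul_proj : proj * proj = proj := by
  nth_rewrite 2 [proj]
  rw [mul_sub, mul_one, ← mul_assoc, proj_mul_shift, zero_mul, sub_zero]

theorem proj_mul_shift_pow {k : ℕ} (hk : 0 < k) : proj * shift ^ k = 0 := by
  rw [← Nat.succ_pred_eq_of_pos hk, pow_succ', ← mul_assoc, proj_mul_shift, zero_mul]

theorem star_shift_pow_mul_proj {k : ℕ} (hk : 0 < k) : star shift ^ k * proj = 0 := by
  simpa [star_mul, star_pow, star_proj] using congrArg star (proj_mul_shift_pow hk)

theorem proj_mul_star_shift_pow_mul_shift_pow_mul_proj (j k : ℕ) :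
    proj * (star shift ^ j * shift ^ k) * proj = if j = k then proj else 0 := by
  rcases lt_trichotomy j k with h | rfl | h
  · rw [star_shift_pow_mul_shift_pow_of_le h.le, proj_mul_shift_pow (by omega), zero_mul,
      if_neg h.ne]
  · rw [pow_mul_pow_eq_one j star_shift_mul_shift, mul_one, proj_mul_proj, if_pos rfl]
  · rw [star_shift_pow_mul_shift_pow_of_ge h.le, mul_assoc, star_shift_pow_mul_proj (by omega),
      mul_zero, if_neg h.ne']

def matrixUnit (i j : ℕ) : ToeplitzAlgebra := shift ^ i * proj * star shift ^ j

theorem matrixUnit_zero_right (i : ℕ) : matrixUnit i 0 = shift ^ i * proj := by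
  simp [matrixUnit]

theorem matrixUnit_zero_zero : matrixUnit 0 0 = proj := by
  simp [matrixUnit]

theorem star_matrixUnit (i j : ℕ) : star (matrixUnit i j) = matrixUnit j i := by
  simp [matrixUnit, star_mul, star_pow, star_proj, mul_assoc]

theorem matrixUnit_mul_matrixUnit (i j k l : ℕ) :
    matrixUnit i j * matrixUnit k l = if j = k then matrixUnit i l else 0 := by
  calc matrixUnit i j * matrixUnit k l
      = shift ^ i * (proj * (star shift ^ j * shift ^ k) * proj) * star shift ^ l := by
        simp only [matrixUnit, mul_assoc]
    _ = _ := by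
        rw [proj_mul_star_shift_pow_mul_shift_pow_mul_proj]
        split_ifs <;> simp [matrixUnit, mul_assoc]

theorem shift_pow_mul_star_shift_pow_add_sum_matrixUnit (b : ℕ) :
    shift ^ b * star shift ^ b + ∑ k ∈ Finset.range b, matrixUnit k k = 1 := by
  induction b with
  | zero => simp
  | succ b ih =>
    rw [Finset.sum_range_succ, ← ih, ← add_assoc, add_right_comm]
    congr 1
    rw [matrixUnit, proj, pow_succ, pow_succ']
    simp only [mul_sub, sub_mul, mul_one, mul_assoc]
    abel

def bicyclic : Submonoid ToeplitzAlgebra where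
  carrier := range fun p : ℕ × ℕ => shift ^ p.1 * star shift ^ p.2
  mul_mem' := by
    rintro _ _ ⟨⟨i, j⟩, rfl⟩ ⟨⟨k, l⟩, rfl⟩
    rcases le_total j k with h | h
    · refine ⟨(i + (k - j), l), ?_⟩
      simp only [pow_add, mul_assoc, ← star_shift_pow_mul_shift_pow_of_le h]
    · refine ⟨(i, j - k + l), ?_⟩
      simp only [pow_add, ← mul_assoc, ← star_shift_pow_mul_shift_pow_of_ge h]
  one_mem' := ⟨(0, 0), by simp⟩

theorem mkAlgHom_of_mem_bicyclic (w : FreeMonoid (FreeStarLetter 1)) :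
    RingQuot.mkAlgHom ℂ toeplitzRel (MonoidAlgebra.of ℂ _ w) ∈ bicyclic := by
  induction w with
  | one => rw [map_one, map_one]; exact bicyclic.one_mem
  | of x =>
    rcases x with i | i <;> obtain rfl := Subsingleton.elim i 0
    · exact ⟨(1, 0), by simp [shift, u, FreeStarAlgebra.gen]⟩
    · exact ⟨(0, 1), by simp [shift, star_mkAlgHom, u]⟩
  | mul x y hx hy => rw [map_mul, map_mul]; exact bicyclic.mul_mem hx hy

theorem span_bicyclic : span ℂ (bicyclic : Set ToeplitzAlgebra) = ⊤ := by
  refine eq_top_iff'.2 fun t => ?_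
  obtain ⟨f, rfl⟩ := RingQuot.mkAlgHom_surjective ℂ toeplitzRel t
  induction f using MonoidAlgebra.induction_on with
  | of w => exact subset_span (mkAlgHom_of_mem_bicyclic w)
  | add f g hf hg => rw [map_add]; exact add_mem hf hg
  | smul c f hf => rw [map_smul]; exact smul_mem _ c hf

theorem mul_proj_mem_span (t : ToeplitzAlgebra) :
    t * proj ∈ span ℂ (range fun k => matrixUnit k 0) := by
  have : span ℂ (bicyclic : Set ToeplitzAlgebra) ≤
      (span ℂ (range fun k => matrixUnit k 0)).comap (LinearMap.mulRight ℂ proj) := by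
    refine span_le.2 ?_
    rintro _ ⟨⟨i, j⟩, rfl⟩
    rcases Nat.eq_zero_or_pos j with rfl | hj
    · exact subset_span ⟨i, by simp [matrixUnit]⟩
    · simp [mul_assoc, star_shift_pow_mul_proj hj]
  exact this (span_bicyclic ▸ mem_top)

theorem eventually_mul_shift_pow_mem_span (t : ToeplitzAlgebra) :
    ∀ᶠ b in atTop, t * shift ^ b ∈ span ℂ (range (shift ^ ·)) := by
  have ht : t ∈ span ℂ (bicyclic : Set ToeplitzAlgebra) := span_bicyclic ▸ mem_top
  induction ht using span_induction with
  | mem _ h =>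
    obtain ⟨⟨i, j⟩, rfl⟩ := h
    filter_upwards [eventually_ge_atTop j] with b hb
    rw [mul_assoc, star_shift_pow_mul_shift_pow_of_le hb, ← pow_add]
    exact subset_span ⟨_, rfl⟩
  | zero => simp
  | add x y _ _ hx hy =>
    filter_upwards [hx, hy] with b hx hy
    rw [add_mul]
    exact add_mem hx hy
  | smul c x _ hx =>
    filter_upwards [hx] with b hx
    rw [smul_mul_assoc]
    exact smul_mem _ c hx

/-- The representation of `T` on `ℕ →₀ ℂ` in which `shift` acts as the unilateral shift. -/
def toEnd : ToeplitzAlgebra →ₐ[ℂ] Module.End ℂ (ℕ →₀ ℂ) :=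
  RingQuot.liftAlgHom ℂ
    ⟨MonoidAlgebra.lift ℂ _ _ (FreeMonoid.lift (Sum.elim
      (fun _ => Finsupp.lmapDomain ℂ ℂ Nat.succ)
      (fun _ => Finsupp.lcomapDomain Nat.succ Nat.succ_injective))), by
      rintro _ _ ⟨rfl, rfl⟩
      ext n : 2
      simp [u, FreeStarAlgebra.gen]⟩

theorem toEnd_shift : toEnd shift = Finsupp.lmapDomain ℂ ℂ Nat.succ := by
  simp [toEnd, shift, u, FreeStarAlgebra.gen]

theorem toEnd_star_shift :
    toEnd (star shift) = Finsupp.lcomapDomain Nat.succ Nat.succ_injective := by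
  simp [toEnd, shift, star_mkAlgHom, u]

theorem toEnd_matrixUnit_single_zero (k : ℕ) :
    toEnd (matrixUnit k 0) (Finsupp.single 0 1) = Finsupp.single k 1 := by
  have hproj : toEnd proj (Finsupp.single 0 1) = Finsupp.single 0 1 := by
    simp [proj, toEnd_shift, toEnd_star_shift]
  induction k with
  | zero => simpa [matrixUnit] using hproj
  | succ k ih =>
    rw [matrixUnit, pow_succ', mul_assoc, mul_assoc, map_mul, Module.End.mul_apply, ← mul_assoc,
      ← matrixUnit.eq_def, ih]
    simp [toEnd_shift]

def coeff (m : ℕ) : ToeplitzAlgebra →ₗ[ℂ] ℂ :=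
  Finsupp.lapply m ∘ₗ LinearMap.applyₗ (Finsupp.single 0 1) ∘ₗ toEnd.toLinearMap

theorem coeff_matrixUnit (k m : ℕ) : coeff m (matrixUnit k 0) = if k = m then 1 else 0 := by
  simp [coeff, toEnd_matrixUnit_single_zero, Finsupp.single_apply]

section Tensor

variable {B : Type*} [Semiring B] [Algebra ℂ B]

theorem eventually_mul_one_tmul_shift_pow_mem_range (z : B ⊗[ℂ] ToeplitzAlgebra) :
    ∀ᶠ b in atTop, z * (1 ⊗ₜ (shift ^ b)) ∈ LinearMap.range (tmulCombination ℂ B (shift ^ ·)) := by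
  induction z using TensorProduct.induction_on with
  | zero => simp
  | tmul a t =>
    filter_upwards [eventually_mul_shift_pow_mem_span t] with b hb
    rw [Algebra.TensorProduct.tmul_mul_tmul, mul_one]
    exact tmul_mem_range_tmulCombination a hb
  | add y z hy hz =>
    filter_upwards [hy, hz] with b hy hz
    rw [add_mul]
    exact add_mem hy hz

theorem eq_zero_of_sum_tmul_matrixUnit_eq_zero {M : Type*} [AddCommMonoid M] [Module ℂ M]
    {ι : Type*} {s : Finset ι} {a : ι → M} {e : ι → ℕ} (he : InjOn e s)
    (h : ∑ i ∈ s, a i ⊗ₜ[ℂ] matrixUnit (e i) 0 = 0) : ∀ i ∈ s, a i = 0 := by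
  intro i hi
  calc a i = ∑ j ∈ s, if e j = e i then a j else 0 := by
        rw [Finset.sum_eq_single_of_mem i hi fun j hj hji => if_neg fun h => hji (he hj hi h),
          if_pos rfl]
    _ = (TensorProduct.rid ℂ M ∘ₗ (coeff (e i)).lTensor M)
          (∑ j ∈ s, a j ⊗ₜ matrixUnit (e j) 0) := by
        simp [coeff_matrixUnit, ite_smul]
    _ = 0 := by rw [h, map_zero]

theorem eq_zero_of_tmul_proj_eq_zero {M : Type*} [AddCommMonoid M] [Module ℂ M] {x : M}
    (h : x ⊗ₜ[ℂ] proj = 0) : x = 0 :=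
  eq_zero_of_sum_tmul_matrixUnit_eq_zero (s := {0}) (a := fun _ => x) (e := id) (injOn_id _)
    (by simpa [matrixUnit_zero_zero] using h) 0 (Finset.mem_singleton_self 0)

theorem eq_zero_of_forall_mul_one_tmul_matrixUnit_eq_zero {z : B ⊗[ℂ] ToeplitzAlgebra}
    (h : ∀ k, z * (1 ⊗ₜ matrixUnit k 0) = 0) : z = 0 := by
  obtain ⟨b, a, ha⟩ := (eventually_mul_one_tmul_shift_pow_mem_range z).exists
  have hcol : tmulCombination ℂ B (fun k => matrixUnit k 0) a = 0 := by
    simp only [matrixUnit_zero_right]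
    rw [← tmulCombination_mul_one_tmul, ha, mul_assoc, Algebra.TensorProduct.tmul_mul_tmul,
      mul_one, ← matrixUnit_zero_right, h]
  have hb : z * (1 ⊗ₜ (shift ^ b)) = 0 := by
    rw [← ha, tmulCombination_apply]
    refine Finset.sum_eq_zero fun k hk => ?_
    simp [eq_zero_of_sum_tmul_matrixUnit_eq_zero (e := id) (injOn_id _) hcol k hk]
  have hdiag (k : ℕ) : matrixUnit k k = matrixUnit k 0 * star shift ^ k := by
    simp [matrixUnit]
  calc z = z * (1 ⊗ₜ (shift ^ b * star shift ^ b + ∑ k ∈ Finset.range b, matrixUnit k k)) := by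
        rw [shift_pow_mul_star_shift_pow_add_sum_matrixUnit, ← Algebra.TensorProduct.one_def,
          mul_one]
    _ = z * (1 ⊗ₜ (shift ^ b)) * (1 ⊗ₜ (star shift ^ b)) +
          ∑ k ∈ Finset.range b, z * (1 ⊗ₜ matrixUnit k 0) * (1 ⊗ₜ (star shift ^ k)) := by
        simp only [hdiag, tmul_add, tmul_sum, mul_add, Finset.mul_sum, mul_assoc,
          Algebra.TensorProduct.tmul_mul_tmul, mul_one]
    _ = 0 := by simp [hb, h]

end Tensor

end ToeplitzAlgebra

/- `Mathlib` has its own star on `A ⊗[ℂ] B`, which is not syntactically the one defined above;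
these instances, being the most recent, make the generic `star` lemmas apply to the latter. -/
instance : StarAddMonoid (A ⊗[ℂ] ToeplitzAlgebra) where
  star_involutive z := by
    change tensorStarAddHom A (tensorStarAddHom A z) = z
    induction z using TensorProduct.induction_on with
    | zero => simp only [map_zero]
    | tmul a t =>
      show star (star (a ⊗ₜ[ℂ] t)) = a ⊗ₜ t
      rw [star_tmul, star_tmul, star_star, star_star]
    | add y z hy hz => rw [map_add, map_add, hy, hz]
  star_add := map_add (tensorStarAddHom A)

instance : StarMul (A ⊗[ℂ] ToeplitzAlgebra) where
  toInvolutiveStar := StarAddMonoid.toInvolutiveStar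
  star_mul x y := by
    induction x using TensorProduct.induction_on with
    | zero => rw [zero_mul, star_zero, mul_zero]
    | tmul a t =>
      induction y using TensorProduct.induction_on with
      | zero => rw [mul_zero, star_zero, zero_mul]
      | tmul b s => simp only [Algebra.TensorProduct.tmul_mul_tmul, star_tmul, star_mul]
      | add y₁ y₂ h₁ h₂ => rw [mul_add, star_add, h₁, h₂, star_add, add_mul]
    | add x₁ x₂ h₁ h₂ => rw [add_mul, star_add, h₁, h₂, star_add, mul_add]

namespace ToeplitzAlgebra

variable {A}

theorem star_sum_tmul_matrixUnit_mul_self {ι : Type*} {s : Finset ι} (a : ι → A) {e : ι → ℕ}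
    (he : InjOn e s) :
    star (∑ i ∈ s, a i ⊗ₜ[ℂ] matrixUnit (e i) 0) * ∑ i ∈ s, a i ⊗ₜ[ℂ] matrixUnit (e i) 0 =
      (∑ i ∈ s, star (a i) * a i) ⊗ₜ proj := by
  simp only [star_sum, star_tmul, star_matrixUnit, Finset.sum_mul_sum,
    Algebra.TensorProduct.tmul_mul_tmul, matrixUnit_mul_matrixUnit, matrixUnit_zero_zero,
    TensorProduct.sum_tmul]
  refine Finset.sum_congr rfl fun i hi => ?_
  rw [Finset.sum_eq_single_of_mem i hi fun j hj hji => ?_, if_pos rfl]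
  rw [if_neg fun h => hji (he hj hi h.symm), tmul_zero]

theorem mul_one_tmul_matrixUnit_eq_zero (hA : CompletelyPositive A) {z : A ⊗[ℂ] ToeplitzAlgebra}
    (hz : star z * z = 0) (k : ℕ) : z * (1 ⊗ₜ matrixUnit k 0) = 0 := by
  obtain ⟨a, ha⟩ := mul_one_tmul_mem_range_tmulCombination (R := ℂ) mul_proj_mem_span
    (z * (1 ⊗ₜ (shift ^ k)))
  have hw : z * (1 ⊗ₜ matrixUnit k 0) = ∑ j ∈ a.support, a j ⊗ₜ matrixUnit j 0 := by
    change _ = tmulCombination ℂ A (fun j => matrixUnit j 0) a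
    rw [ha, mul_assoc, Algebra.TensorProduct.tmul_mul_tmul, mul_one, matrixUnit_zero_right]
  have hsq : (∑ j ∈ a.support, star (a j) * a j) ⊗ₜ[ℂ] proj = 0 := by
    rw [← star_sum_tmul_matrixUnit_mul_self a (e := fun j => j) (injOn_id _), ← hw, star_mul,
      mul_assoc, ← mul_assoc (star z), hz, zero_mul, mul_zero]
  rw [hw]
  refine Finset.sum_eq_zero fun j hj => ?_
  rw [hA.eq_zero_of_sum_star_mul_self_eq_zero (eq_zero_of_tmul_proj_eq_zero hsq) j hj, zero_tmul]

end ToeplitzAlgebra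

/-- a unital complex `*`-algebra `A` is completely positive if and only if the
tensor product `*`-algebra `A ⊗ T` with the Toeplitz `*`-algebra `T` is positive, i.e.
`z*z = 0` implies `z = 0` in `A ⊗ T`. -/
theorem completelyPositive_iff_tensor_toeplitz_positive :
    CompletelyPositive A ↔
      ∀ z : A ⊗[ℂ] ToeplitzAlgebra, star z * z = 0 → z = 0 := by
  refine ⟨fun hA z hz => ToeplitzAlgebra.eq_zero_of_forall_mul_one_tmul_matrixUnit_eq_zero
    (ToeplitzAlgebra.mul_one_tmul_matrixUnit_eq_zero hA hz), fun hpos n _ f hf i => ?_⟩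
  have hinj : InjOn (Fin.val : Fin n → ℕ) (Finset.univ : Finset (Fin n)) :=
    Fin.val_injective.injOn
  refine ToeplitzAlgebra.eq_zero_of_sum_tmul_matrixUnit_eq_zero hinj (hpos _ ?_) i
    (Finset.mem_univ i)
  rw [ToeplitzAlgebra.star_sum_tmul_matrixUnit_mul_self f hinj, hf, zero_tmul]

end TensorStar
end

section
/- Let W be the free monoid on the 2n letters x₁,…,x_n,x₁*,…,x_n*, with involution w ↦ w* that reverses each word and exchanges the letters xᵢ and xᵢ*. Let S ⊆ W be a set of words such that S* = S and every word in S is unshrinkable, i.e. cannot be written as d*d·u or u·d*d for some nonempty word d and (possibly empty) word u. Let F be the free *-algebra on x₁,…,x_n and J the two-sided ideal of F generated by S. Then the quotient *-algebra F/J is O*-representable. -/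
section Props

variable (B : Type) [Ring B] [Algebra ℂ B] [Star B]

/-- `B` is O*-representable: there is a faithful `*`-representation of `B` by linear operators
on a complex inner product (pre-Hilbert) space `E`, i.e. an injective `ℂ`-algebra homomorphism
`π : B → L(E)` with `⟪π(b)ξ, η⟫ = ⟪ξ, π(b*)η⟫` for all `b ∈ B` and `ξ, η ∈ E`. -/
def OStarRepresentable : Prop :=
  ∃ (E : Type) (_ : NormedAddCommGroup E) (_ : InnerProductSpace ℂ E)
    (π : B →ₐ[ℂ] Module.End ℂ E),
      Function.Injective π ∧
        ∀ (b : B) (ξ η : E), (inner ℂ (π b ξ) η : ℂ) = inner ℂ ξ (π (star b) η)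

end Props

noncomputable section Stmt17
open FreeStarAlgebra

variable {n : ℕ}

/-- A word `w` is unshrinkable if it cannot be written as `d*d·u` or `u·d*d`
with `d` a nonempty word. -/
def Unshrinkable (w : FreeMonoid (FreeStarLetter n)) : Prop :=
  ¬ ∃ (d u : FreeMonoid (FreeStarLetter n)), d ≠ 1 ∧
      (w = wordStar d * d * u ∨ w = u * (wordStar d * d))

/-- The relations `w = 0` for all words `w` in the set `S`. -/
def monRel (S : Set (FreeMonoid (FreeStarLetter n))) :
    FreeStarAlgebra n → FreeStarAlgebra n → Prop := fun f g =>
  (∃ w ∈ S, f = MonoidAlgebra.single w 1) ∧ g = 0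

theorem monRel_star (S : Set (FreeMonoid (FreeStarLetter n)))
    (hstar : ∀ w ∈ S, wordStar w ∈ S) :
    ∀ f g, monRel S f g → monRel S (star f) (star g) := by
  rintro f g ⟨⟨w, hw, rfl⟩, rfl⟩
  exact ⟨⟨wordStar w, hstar w hw, by simp⟩, by simp⟩

/-!
Call a word reduced if it has no factor in `S`. On the free `*`-algebra take the functional `φ`
with `φ(w) = b ^ |w| ^ 2` when `w = p* p` is reduced and `φ(w) = 0` otherwise. It is hermitian and
vanishes on the ideal generated by `S`, so it descends to the quotient `A`, and `⟪x, y⟫ = φ(x* y)`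
makes left multiplication a faithful `*`-representation of `A` as soon as `φ(x* x) > 0` for
`x ≠ 0`. Every `x` is represented by a combination of reduced words, so this is positive
definiteness of the Gram matrix `φ(u* v)` on reduced words. Its diagonal entries are positive
because unshrinkability keeps `u* u` reduced; an off-diagonal entry is nonzero only if
`v = e* e u` or `u = e* e v`, and after scaling to unit diagonal it becomes
`b⁻¹ ^ (|u| - |v|) ^ 2`. As there are at most `(2n) ^ g + 1` such `v` with `|e| = g`, the
scaled matrix is strictly diagonally dominant once `b > 2 (2n + 1)`.
-/

open ComplexConjugate
open scoped Finset

theorem Finset.sum_sum_erase_comm {ι M : Type*} [DecidableEq ι] [AddCommGroup M] (T : Finset ι)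
    (F : ι → ι → M) : ∑ u ∈ T, ∑ v ∈ T.erase u, F v u = ∑ u ∈ T, ∑ v ∈ T.erase u, F u v := by
  rw [Finset.sum_congr rfl fun u hu => Finset.sum_erase_eq_sub (f := (F · u)) hu,
    Finset.sum_congr rfl fun u hu => Finset.sum_erase_eq_sub (f := F u) hu,
    Finset.sum_sub_distrib, Finset.sum_sub_distrib, Finset.sum_comm]

theorem re_sum_sum_conj_mul_pos_of_diagDominant {ι : Type*} [DecidableEq ι] (T : Finset ι)
    (E : ι → ι → ℝ) (hsymm : ∀ u v, E u v = E v u)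
    (hdom : ∀ u ∈ T, ∑ v ∈ T.erase u, |E u v| < E u u) (z : ι → ℂ) (hz : ∃ u ∈ T, z u ≠ 0) :
    0 < (∑ u ∈ T, ∑ v ∈ T, conj (z u) * z v * E u v).re := by
  have hdiag : ∀ u, (conj (z u) * z u * E u u).re = ‖z u‖ ^ 2 * E u u := fun u => by
    rw [mul_comm (conj _), Complex.mul_conj', ← Complex.ofReal_pow, ← Complex.ofReal_mul,
      Complex.ofReal_re]
  have hoff : ∀ u v, -((‖z u‖ ^ 2 + ‖z v‖ ^ 2) / 2 * |E u v|) ≤ (conj (z u) * z v * E u v).re :=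
    fun u v => by
    have hamgm : ‖z u‖ * ‖z v‖ ≤ (‖z u‖ ^ 2 + ‖z v‖ ^ 2) / 2 := by
      nlinarith [sq_nonneg (‖z u‖ - ‖z v‖)]
    have hre := Complex.abs_re_le_norm (conj (z u) * z v * E u v)
    rw [norm_mul, norm_mul, Complex.norm_conj, Complex.norm_real, Real.norm_eq_abs] at hre
    nlinarith [abs_le.mp hre, abs_nonneg (E u v)]
  have hswap : ∑ u ∈ T, ∑ v ∈ T.erase u, (‖z u‖ ^ 2 + ‖z v‖ ^ 2) / 2 * |E u v|
      = ∑ u ∈ T, ‖z u‖ ^ 2 * ∑ v ∈ T.erase u, |E u v| := by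
    have h := Finset.sum_sum_erase_comm T fun u v => ‖z v‖ ^ 2 / 2 * |E u v|
    simp only [hsymm _ _] at h
    simp only [add_div, add_mul, Finset.sum_add_distrib]
    rw [← h, ← Finset.sum_add_distrib]
    refine Finset.sum_congr rfl fun u _ => ?_
    rw [Finset.mul_sum, ← Finset.sum_add_distrib]
    exact Finset.sum_congr rfl fun v _ => by ring
  obtain ⟨u₀, hu₀, hzu₀⟩ := hz
  calc 0 < ∑ u ∈ T, ‖z u‖ ^ 2 * (E u u - ∑ v ∈ T.erase u, |E u v|) := by
        refine Finset.sum_pos' (fun u hu => mul_nonneg (sq_nonneg _) (sub_pos.2 (hdom u hu)).le)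
          ⟨u₀, hu₀, mul_pos (by positivity) (sub_pos.2 (hdom u₀ hu₀))⟩
    _ = ∑ u ∈ T, (‖z u‖ ^ 2 * E u u
          + ∑ v ∈ T.erase u, -((‖z u‖ ^ 2 + ‖z v‖ ^ 2) / 2 * |E u v|)) := by
        simp only [Finset.sum_neg_distrib, ← sub_eq_add_neg, hswap,
          mul_sub, Finset.sum_sub_distrib]
    _ ≤ ∑ u ∈ T, ∑ v ∈ T, (conj (z u) * z v * E u v).re := by
        refine Finset.sum_le_sum fun u hu => ?_
        rw [← Finset.add_sum_erase _ _ hu, hdiag]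
        gcongr with v
        exact hoff u v
    _ = (∑ u ∈ T, ∑ v ∈ T, conj (z u) * z v * E u v).re := by
        simp only [Complex.re_sum]

theorem sum_pow_le_of_card_fiber_le {ι : Type*} (A : Finset ι) (f : ι → ℕ) (M : ℕ) {x : ℝ}
    (hx : 0 ≤ x) (hMx : M * x < 1) (hf : ∀ a ∈ A, 1 ≤ f a)
    (hcard : ∀ g, 1 ≤ g → #{a ∈ A | f a = g} ≤ M ^ g) :
    ∑ a ∈ A, x ^ f a ≤ M * x / (1 - M * x) := by
  have hsub : A.image f ⊆ Finset.Ico 1 (A.sup f + 1) := fun g hg => by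
    obtain ⟨a, ha, rfl⟩ := Finset.mem_image.1 hg
    exact Finset.mem_Ico.2 ⟨hf a ha, Nat.lt_succ_of_le (Finset.le_sup ha)⟩
  calc ∑ a ∈ A, x ^ f a = ∑ g ∈ A.image f, #{a ∈ A | f a = g} • x ^ g :=
        Finset.sum_comp (x ^ ·) f
    _ ≤ ∑ g ∈ A.image f, (M * x) ^ g := by
        refine Finset.sum_le_sum fun g hg => ?_
        obtain ⟨a, ha, rfl⟩ := Finset.mem_image.1 hg
        rw [nsmul_eq_mul, mul_pow]
        gcongr
        exact_mod_cast hcard _ (hf a ha)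
    _ ≤ ∑ g ∈ Finset.Ico 1 (A.sup f + 1), (M * x) ^ g :=
        Finset.sum_le_sum_of_subset_of_nonneg hsub fun _ _ _ => by positivity
    _ ≤ (M * x) ^ 1 / (1 - M * x) := geom_sum_Ico_le_of_lt_one (by positivity) hMx
    _ = M * x / (1 - M * x) := by rw [pow_one]

namespace RingQuot

variable {R A : Type*} [CommSemiring R] [Semiring A] [Algebra R A]

theorem exists_linearMap_comp_mkAlgHom {M : Type*} [AddCommMonoid M] [Module R M]
    (r : A → A → Prop) (φ : A →ₗ[R] M)
    (hφ : ∀ a b, r a b → ∀ x y, φ (x * a * y) = φ (x * b * y)) :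
    ∃ ψ : RingQuot r →ₗ[R] M, ∀ a, ψ (mkAlgHom R r a) = φ a := by
  have hrel : ∀ a b, Rel r a b → ∀ x y, φ (x * a * y) = φ (x * b * y) := by
    intro a b h
    induction h with
    | of h => exact hφ _ _ h
    | add_left _ ih => intro x y; simp only [mul_add, add_mul, map_add, ih]
    | mul_left _ ih => intro x y; simp only [mul_assoc] at ih ⊢; exact ih x _
    | mul_right _ ih => intro x y; simp only [← mul_assoc] at ih ⊢; exact ih _ y
  let f : RingQuot r → M := fun q =>
    Quot.lift φ (fun a b h => by simpa using hrel a b h 1 1) q.toQuot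
  have hf : ∀ a, f (mkAlgHom R r a) = φ a := fun a => by
    simp only [f, mkAlgHom_def, mkRingHom_def]
    rfl
  have hsurj := mkAlgHom_surjective R r
  refine ⟨{ toFun := f, map_add' := ?_, map_smul' := ?_ }, hf⟩
  · intro p q
    obtain ⟨a, rfl⟩ := hsurj p
    obtain ⟨b, rfl⟩ := hsurj q
    rw [← map_add, hf, hf, hf, map_add]
  · intro c p
    obtain ⟨a, rfl⟩ := hsurj p
    rw [← map_smul, hf, hf, map_smul, RingHom.id_apply]

variable [StarRing A] (r : A → A → Prop) (hr : ∀ a b, r a b → r (star a) (star b))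

theorem mkAlgHom_star (a : A) :
    letI := starRing r hr
    star (mkAlgHom R r a) = mkAlgHom R r (star a) := by
  simp only [mkAlgHom_def, mkRingHom_def]
  rfl

theorem starModule [Star R] [StarModule R A] :
    letI := starRing r hr
    StarModule R (RingQuot r) := by
  let := starRing r hr
  refine ⟨fun c p => ?_⟩
  obtain ⟨a, rfl⟩ := mkAlgHom_surjective R r p
  rw [← map_smul, mkAlgHom_star, mkAlgHom_star, star_smul, map_smul]

end RingQuot

theorem OStarRepresentable.of_re_star_mul_self_pos {A : Type} [Ring A] [Algebra ℂ A] [StarRing A]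
    [StarModule ℂ A] (φ : A →ₗ[ℂ] ℂ) (hφ_star : ∀ a, φ (star a) = conj (φ a))
    (hφ_pos : ∀ a, a ≠ 0 → 0 < (φ (star a * a)).re) : OStarRepresentable A := by
  let core : InnerProductSpace.Core ℂ A :=
    { inner a b := φ (star a * b)
      conj_inner_symm a b := by rw [← hφ_star, star_mul, star_star]
      re_inner_nonneg a := by
        rcases eq_or_ne a 0 with rfl | ha
        · simp
        · exact (hφ_pos a ha).le
      definite a ha := by
        by_contra ha'
        have := hφ_pos a ha'
        simp_all
      add_left a b c := by simp only [star_add, add_mul, map_add]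
      smul_left a b c := by
        simp only [star_smul, smul_mul_assoc, map_smul, smul_eq_mul, Complex.star_def] }
  let := core.toNormedAddCommGroup
  let := InnerProductSpace.ofCore core.toCore
  refine ⟨A, _, _, Algebra.lmul ℂ A, fun a b hab => by simpa using congr($hab 1), ?_⟩
  intro b ξ η
  change φ (star (b * ξ) * η) = φ (star ξ * (star b * η))
  rw [star_mul, mul_assoc]

namespace FreeMonoid

variable {α : Type*}

instance [DecidableEq α] : DecidableEq (FreeMonoid α) := inferInstanceAs (DecidableEq (List α))

theorem mul_eq_mul_iff {a b c d : FreeMonoid α} :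
    a * b = c * d ↔ (∃ e, c = a * e ∧ b = e * d) ∨ ∃ e, a = c * e ∧ d = e * b := by
  simp only [← toList.injective.eq_iff, toList_mul, List.append_eq_append_iff]
  constructor
  · rintro (⟨e, h₁, h₂⟩ | ⟨e, h₁, h₂⟩)
    · exact .inl ⟨ofList e, h₁, h₂⟩
    · exact .inr ⟨ofList e, h₁, h₂⟩
  · rintro (⟨e, h₁, h₂⟩ | ⟨e, h₁, h₂⟩)
    · exact .inl ⟨toList e, h₁, h₂⟩
    · exact .inr ⟨toList e, h₁, h₂⟩

theorem eq_ofList_drop_of_eq_mul {a v w : FreeMonoid α} (h : w = a * v) :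
    v = ofList (w.toList.drop a.length) := by
  rw [h, toList_mul, length, List.drop_left]
  rfl

end FreeMonoid

def HasFactorIn {M : Type*} [Monoid M] (S : Set M) (w : M) : Prop :=
  ∃ a s b, s ∈ S ∧ w = a * s * b

namespace FreeStarAlgebra

variable {n : ℕ} {S : Set (FreeMonoid (FreeStarLetter n))} {b : ℝ}

@[simp] theorem length_wordStar (w : FreeMonoid (FreeStarLetter n)) :
    (wordStar w).length = w.length := by
  induction w using FreeMonoid.recOn with
  | one => rfl
  | of_mul x w ih => simp [FreeMonoid.length_mul, ih, add_comm]

theorem wordStar_injective : Function.Injective (wordStar (n := n)) :=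
  Function.LeftInverse.injective wordStar_wordStar

theorem _root_.HasFactorIn.of_wordStar (hstar : ∀ w ∈ S, wordStar w ∈ S)
    {w : FreeMonoid (FreeStarLetter n)} (h : HasFactorIn S (wordStar w)) : HasFactorIn S w := by
  obtain ⟨a, s, b, hs, hw⟩ := h
  refine ⟨wordStar b, wordStar s, wordStar a, hstar s hs, ?_⟩
  rw [← wordStar_wordStar w, hw]
  simp [mul_assoc]

theorem not_hasFactorIn_wordStar_mul_self (hstar : ∀ w ∈ S, wordStar w ∈ S)
    (hunshrink : ∀ w ∈ S, Unshrinkable w) {u : FreeMonoid (FreeStarLetter n)}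
    (hu : ¬ HasFactorIn S u) : ¬ HasFactorIn S (wordStar u * u) := by
  have hu' : ¬ HasFactorIn S (wordStar u) := fun h => hu (h.of_wordStar hstar)
  rintro ⟨a, s, b, hs, hsplit⟩
  rw [mul_assoc, FreeMonoid.mul_eq_mul_iff] at hsplit
  rcases hsplit with ⟨e, -, hu_eq⟩ | ⟨e, hua, hsb⟩
  · exact hu ⟨e, s, b, hs, by rw [hu_eq, mul_assoc]⟩
  rcases FreeMonoid.mul_eq_mul_iff.1 hsb with ⟨f, he, -⟩ | ⟨f, hs_eq, hu_eq⟩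
  · exact hu' ⟨a, s, f, hs, by rw [hua, he, mul_assoc]⟩
  have hu_star : u = wordStar e * wordStar a := by
    rw [← wordStar_wordStar u, hua, wordStar_mul]
  rcases FreeMonoid.mul_eq_mul_iff.1 (hu_star.symm.trans hu_eq) with
    ⟨g, hf, -⟩ | ⟨g, hef, -⟩
  · rcases eq_or_ne e 1 with rfl | he
    · exact hu ⟨1, s, b, hs, by rw [hu_eq, hs_eq, one_mul, one_mul, hf, wordStar_one, one_mul]⟩
    refine hunshrink s hs ⟨wordStar e, g, fun h => he (wordStar_injective (by simpa using h)),
      .inl ?_⟩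
    rw [hs_eq, hf, wordStar_wordStar, mul_assoc]
  · rcases eq_or_ne f 1 with rfl | hf
    · exact hu' ⟨a, s, 1, hs, by rw [hua, hs_eq, mul_one, mul_one]⟩
    refine hunshrink s hs ⟨f, wordStar g, hf, .inr ?_⟩
    rw [hs_eq, ← wordStar_wordStar e, hef, wordStar_mul, mul_assoc]

theorem wordStar_mul_eq_wordStar_mul_self {u v p : FreeMonoid (FreeStarLetter n)}
    (h : wordStar u * v = wordStar p * p) :
    (∃ e, v = wordStar e * e * u) ∨ ∃ e, u = wordStar e * e * v := by
  rcases FreeMonoid.mul_eq_mul_iff.1 h with ⟨e, hp, hv⟩ | ⟨e, hu, hp⟩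
  · refine .inl ⟨wordStar e, ?_⟩
    rw [hv, ← wordStar_wordStar p, hp]
    simp [mul_assoc]
  · refine .inr ⟨e, ?_⟩
    rw [← wordStar_wordStar u, hu, hp]
    simp [mul_assoc]

theorem card_le_of_forall_eq_wordStar_mul_self_mul (u : FreeMonoid (FreeStarLetter n)) {g : ℕ}
    (hg : 1 ≤ g) (A : Finset (FreeMonoid (FreeStarLetter n)))
    (hA : ∀ v ∈ A, ∃ e : FreeMonoid (FreeStarLetter n), e.length = g ∧
      (v = wordStar e * e * u ∨ u = wordStar e * e * v)) :
    #A ≤ (2 * n + 1) ^ g := by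
  let up : List.Vector (FreeStarLetter n) g → FreeMonoid (FreeStarLetter n) := fun e =>
    wordStar (FreeMonoid.ofList e.toList) * FreeMonoid.ofList e.toList * u
  have hsub : A ⊆ Finset.univ.image up ∪ {FreeMonoid.ofList (u.toList.drop (2 * g))} := by
    intro v hv
    obtain ⟨e, he, rfl | hu⟩ := hA v hv
    · exact Finset.mem_union_left _ (Finset.mem_image.2 ⟨⟨e.toList, he⟩, Finset.mem_univ _, rfl⟩)
    · refine Finset.mem_union_right _ (Finset.mem_singleton.2 ?_)
      rw [FreeMonoid.eq_ofList_drop_of_eq_mul hu, FreeMonoid.length_mul, length_wordStar, he,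
        two_mul]
  calc #A ≤ #(Finset.univ.image up) + 1 :=
        (Finset.card_le_card hsub).trans (Finset.card_union_le _ _)
    _ ≤ (2 * n) ^ g + 1 ^ g := by
        gcongr
        · refine Finset.card_image_le.trans ?_
          simp [card_vector, two_mul]
        · rw [one_pow]
    _ ≤ (2 * n + 1) ^ g := pow_add_pow_le (by positivity) zero_le_one (by omega)

variable (S b) in
open Classical in
def squareWeight (w : FreeMonoid (FreeStarLetter n)) : ℝ :=
  if ¬ HasFactorIn S w ∧ ∃ p, w = wordStar p * p then b ^ w.length ^ 2 else 0

theorem squareWeight_le (hb : 0 ≤ b) (w : FreeMonoid (FreeStarLetter n)) :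
    squareWeight S b w ≤ b ^ w.length ^ 2 := by
  unfold squareWeight
  split_ifs
  exacts [le_rfl, by positivity]

theorem squareWeight_nonneg (hb : 0 ≤ b) (w : FreeMonoid (FreeStarLetter n)) :
    0 ≤ squareWeight S b w := by
  unfold squareWeight
  split_ifs <;> positivity

theorem squareWeight_eq_zero_of_hasFactorIn {w : FreeMonoid (FreeStarLetter n)}
    (h : HasFactorIn S w) : squareWeight S b w = 0 := by
  simp [squareWeight, h]

theorem exists_eq_wordStar_mul_self_of_squareWeight_ne_zero {w : FreeMonoid (FreeStarLetter n)}
    (h : squareWeight S b w ≠ 0) : ∃ p, w = wordStar p * p := by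
  by_contra hw
  simp [squareWeight, hw] at h

theorem wordStar_wordStar_mul_self (p : FreeMonoid (FreeStarLetter n)) :
    wordStar (wordStar p * p) = wordStar p * p := by
  rw [wordStar_mul, wordStar_wordStar]

theorem squareWeight_wordStar (w : FreeMonoid (FreeStarLetter n)) :
    squareWeight S b (wordStar w) = squareWeight S b w := by
  by_cases hw : ∃ p, w = wordStar p * p
  · obtain ⟨p, rfl⟩ := hw
    rw [wordStar_wordStar_mul_self]
  · have hw' : ¬ ∃ p, wordStar w = wordStar p * p := fun ⟨p, hp⟩ =>
      hw ⟨p, by rw [← wordStar_wordStar w, hp, wordStar_wordStar_mul_self]⟩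
    simp [squareWeight, hw, hw']

theorem squareWeight_wordStar_mul_self (hstar : ∀ w ∈ S, wordStar w ∈ S)
    (hunshrink : ∀ w ∈ S, Unshrinkable w) {u : FreeMonoid (FreeStarLetter n)}
    (hu : ¬ HasFactorIn S u) : squareWeight S b (wordStar u * u) = b ^ (2 * u.length) ^ 2 := by
  rw [squareWeight, if_pos ⟨not_hasFactorIn_wordStar_mul_self hstar hunshrink hu, u, rfl⟩,
    FreeMonoid.length_mul, length_wordStar, two_mul]

variable (S b) in
def weightFunctional : FreeStarAlgebra n →ₗ[ℂ] ℂ :=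
  Finsupp.linearCombination ℂ (fun w => (squareWeight S b w : ℂ)) ∘ₗ
    (MonoidAlgebra.coeffLinearEquiv ℂ).toLinearMap

theorem weightFunctional_single (w : FreeMonoid (FreeStarLetter n)) (c : ℂ) :
    weightFunctional S b (MonoidAlgebra.single w c) = c * squareWeight S b w := by
  simp [weightFunctional]

theorem weightFunctional_star (f : FreeStarAlgebra n) :
    weightFunctional S b (star f) = conj (weightFunctional S b f) := by
  induction f using MonoidAlgebra.induction_linear with
  | zero => simp
  | add f g hf hg => rw [star_add, map_add, map_add, map_add, hf, hg]
  | single w c =>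
    rw [star_single, weightFunctional_single, weightFunctional_single, squareWeight_wordStar,
      map_mul, Complex.conj_ofReal]

theorem weightFunctional_mul_single_mul {s : FreeMonoid (FreeStarLetter n)} (hs : s ∈ S)
    (f g : FreeStarAlgebra n) : weightFunctional S b (f * MonoidAlgebra.single s 1 * g) = 0 := by
  induction f using MonoidAlgebra.induction_linear with
  | zero => simp
  | add f₁ f₂ h₁ h₂ => rw [add_mul, add_mul, map_add, h₁, h₂, add_zero]
  | single a c =>
    induction g using MonoidAlgebra.induction_linear with
    | zero => simp
    | add g₁ g₂ h₁ h₂ => rw [mul_add, map_add, h₁, h₂, add_zero]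
    | single a' c' =>
      rw [MonoidAlgebra.single_mul_single, MonoidAlgebra.single_mul_single,
        weightFunctional_single, squareWeight_eq_zero_of_hasFactorIn ⟨a, s, a', hs, rfl⟩,
        Complex.ofReal_zero, mul_zero]

theorem weightFunctional_star_sum_mul_sum (T : Finset (FreeMonoid (FreeStarLetter n)))
    (z : FreeMonoid (FreeStarLetter n) → ℂ) :
    weightFunctional S b (star (∑ u ∈ T, MonoidAlgebra.single u (z u)) *
        ∑ v ∈ T, MonoidAlgebra.single v (z v)) =
      ∑ u ∈ T, ∑ v ∈ T, conj (z u) * z v * squareWeight S b (wordStar u * v) := by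
  simp only [star_sum, star_single, Finset.sum_mul_sum, MonoidAlgebra.single_mul_single, map_sum,
    weightFunctional_single]

variable (S b) in
def squareKernel (u v : FreeMonoid (FreeStarLetter n)) : ℝ :=
  squareWeight S b (wordStar u * v) * b⁻¹ ^ (2 * u.length ^ 2 + 2 * v.length ^ 2)

theorem squareKernel_comm (u v : FreeMonoid (FreeStarLetter n)) :
    squareKernel S b u v = squareKernel S b v u := by
  rw [squareKernel, squareKernel, ← squareWeight_wordStar, wordStar_mul, wordStar_wordStar,
    add_comm]

theorem squareKernel_self (hb : b ≠ 0) (hstar : ∀ w ∈ S, wordStar w ∈ S)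
    (hunshrink : ∀ w ∈ S, Unshrinkable w) {u : FreeMonoid (FreeStarLetter n)}
    (hu : ¬ HasFactorIn S u) : squareKernel S b u u = 1 := by
  rw [squareKernel, squareWeight_wordStar_mul_self hstar hunshrink hu, inv_pow,
    show 2 * u.length ^ 2 + 2 * u.length ^ 2 = (2 * u.length) ^ 2 by ring,
    mul_inv_cancel₀ (pow_ne_zero _ hb)]

theorem squareKernel_le (hb : 0 < b) {u v : FreeMonoid (FreeStarLetter n)} {d : ℕ}
    (hd : u.length + d = v.length) : squareKernel S b u v ≤ b⁻¹ ^ d ^ 2 := by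
  have hexp : 2 * u.length ^ 2 + 2 * v.length ^ 2 = (wordStar u * v).length ^ 2 + d ^ 2 := by
    rw [FreeMonoid.length_mul, length_wordStar, ← hd]
    ring
  calc squareKernel S b u v
      ≤ b ^ (wordStar u * v).length ^ 2 * b⁻¹ ^ (2 * u.length ^ 2 + 2 * v.length ^ 2) := by
        unfold squareKernel
        gcongr
        exact squareWeight_le hb.le _
    _ = b⁻¹ ^ d ^ 2 := by
        rw [hexp, pow_add, ← mul_assoc, inv_pow, mul_inv_cancel₀ (pow_ne_zero _ hb.ne'), one_mul]

theorem exists_eq_wordStar_mul_self_mul_of_squareKernel_ne_zero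
    {u v : FreeMonoid (FreeStarLetter n)} (hvu : v ≠ u) (h : squareKernel S b u v ≠ 0) :
    ∃ e, e ≠ 1 ∧ (v = wordStar e * e * u ∨ u = wordStar e * e * v) := by
  obtain ⟨p, hp⟩ := exists_eq_wordStar_mul_self_of_squareWeight_ne_zero (left_ne_zero_of_mul h)
  rcases wordStar_mul_eq_wordStar_mul_self hp with ⟨e, he⟩ | ⟨e, he⟩
  · refine ⟨e, fun h1 => hvu ?_, .inl he⟩
    simpa [h1] using he
  · refine ⟨e, fun h1 => hvu ?_, .inr he⟩
    simpa [h1] using he.symm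

theorem squareKernel_le_of_eq_wordStar_mul_self_mul (hb : 0 < b)
    {u v e : FreeMonoid (FreeStarLetter n)}
    (h : v = wordStar e * e * u ∨ u = wordStar e * e * v) :
    squareKernel S b u v ≤ b⁻¹ ^ (2 * e.length) ^ 2 := by
  rcases h with rfl | rfl
  · refine squareKernel_le hb ?_
    rw [FreeMonoid.length_mul, FreeMonoid.length_mul, length_wordStar]
    ring
  · rw [squareKernel_comm]
    refine squareKernel_le hb ?_
    rw [FreeMonoid.length_mul, FreeMonoid.length_mul, length_wordStar]
    ring

theorem sum_erase_squareKernel_lt_one (hb : 2 * (2 * n + 1) < b)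
    (T : Finset (FreeMonoid (FreeStarLetter n))) (u : FreeMonoid (FreeStarLetter n)) :
    ∑ v ∈ T.erase u, squareKernel S b u v < 1 := by
  have hb₀ : 0 < b := by linarith
  set x := b⁻¹
  have hx₀ : 0 ≤ x := inv_nonneg.2 hb₀.le
  have hx₁ : x ≤ 1 := inv_le_one_of_one_le₀ (by linarith)
  have hMx : ((2 * n + 1 : ℕ) : ℝ) * x < 1 / 2 := by
    rw [mul_inv_lt_iff₀ hb₀]
    push_cast
    linarith
  set A := (T.erase u).filter fun v => squareKernel S b u v ≠ 0
  set f : FreeMonoid (FreeStarLetter n) → ℕ := fun v =>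
    (v.length - u.length + (u.length - v.length)) / 2
  have hA : ∀ v ∈ A, ∃ e : FreeMonoid (FreeStarLetter n), 1 ≤ e.length ∧ e.length = f v ∧
      (v = wordStar e * e * u ∨ u = wordStar e * e * v) := by
    intro v hv
    obtain ⟨hvT, hK⟩ := Finset.mem_filter.1 hv
    obtain ⟨e, he₁, he⟩ :=
      exists_eq_wordStar_mul_self_mul_of_squareKernel_ne_zero (Finset.ne_of_mem_erase hvT) hK
    refine ⟨e, Nat.one_le_iff_ne_zero.2 (mt FreeMonoid.length_eq_zero.1 he₁), ?_, he⟩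
    rcases he with rfl | rfl <;>
    · simp only [f, FreeMonoid.length_mul, length_wordStar]
      omega
  have hK : ∀ v ∈ A, squareKernel S b u v ≤ x ^ f v := by
    intro v hv
    obtain ⟨e, -, he, h⟩ := hA v hv
    rw [← he]
    exact (squareKernel_le_of_eq_wordStar_mul_self_mul hb₀ h).trans
      (pow_le_pow_of_le_one hx₀ hx₁ (by nlinarith))
  calc ∑ v ∈ T.erase u, squareKernel S b u v = ∑ v ∈ A, squareKernel S b u v :=
        (Finset.sum_filter_ne_zero _).symm
    _ ≤ ∑ v ∈ A, x ^ f v := Finset.sum_le_sum hK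
    _ ≤ ((2 * n + 1 : ℕ) : ℝ) * x / (1 - ((2 * n + 1 : ℕ) : ℝ) * x) := by
        refine sum_pow_le_of_card_fiber_le A f _ hx₀ (by linarith)
          (fun v hv => ?_) fun g hg => ?_
        · obtain ⟨e, he₁, he, -⟩ := hA v hv
          omega
        · refine card_le_of_forall_eq_wordStar_mul_self_mul u hg _ fun v hv => ?_
          obtain ⟨hvA, rfl⟩ := Finset.mem_filter.1 hv
          obtain ⟨e, -, he, h⟩ := hA v hvA
          exact ⟨e, he, h⟩
    _ < 1 := by
        rw [div_lt_one (by linarith)]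
        linarith

theorem re_sum_squareWeight_pos (hstar : ∀ w ∈ S, wordStar w ∈ S)
    (hunshrink : ∀ w ∈ S, Unshrinkable w) (hb : 2 * (2 * n + 1) < b)
    (T : Finset (FreeMonoid (FreeStarLetter n))) (hT : ∀ u ∈ T, ¬ HasFactorIn S u)
    (z : FreeMonoid (FreeStarLetter n) → ℂ) (hz : ∃ u ∈ T, z u ≠ 0) :
    0 < (∑ u ∈ T, ∑ v ∈ T, conj (z u) * z v * squareWeight S b (wordStar u * v)).re := by
  have hb₀ : 0 < b := by linarith
  have hbC : (b : ℂ) ≠ 0 := Complex.ofReal_ne_zero.2 hb₀.ne'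
  let r : FreeMonoid (FreeStarLetter n) → ℝ := fun u => b ^ (2 * u.length ^ 2)
  have hr : ∀ u v, conj (z u) * z v * squareWeight S b (wordStar u * v) =
      conj (z u * r u) * (z v * r v) * squareKernel S b u v := fun u v => by
    simp only [squareKernel, r, map_mul, Complex.ofReal_mul, Complex.ofReal_pow, map_pow,
      Complex.conj_ofReal, Complex.ofReal_inv, pow_add, inv_pow]
    field_simp
  simp only [hr]
  refine re_sum_sum_conj_mul_pos_of_diagDominant T _ squareKernel_comm (fun u hu => ?_) _ ?_
  · simp only [squareKernel_self hb₀.ne' hstar hunshrink (hT u hu)]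
    convert sum_erase_squareKernel_lt_one hb T u using 2 with v
    exact abs_of_nonneg (mul_nonneg (squareWeight_nonneg hb₀.le _) (by positivity))
  · obtain ⟨u, hu, hzu⟩ := hz
    exact ⟨u, hu, mul_ne_zero hzu (by simp [r, hb₀.ne'])⟩

end FreeStarAlgebra

theorem mkAlgHom_monRel_single_eq_zero {S : Set (FreeMonoid (FreeStarLetter n))}
    {w : FreeMonoid (FreeStarLetter n)} (h : HasFactorIn S w) (c : ℂ) :
    RingQuot.mkAlgHom ℂ (monRel S) (MonoidAlgebra.single w c) = 0 := by
  obtain ⟨a, s, b, hs, rfl⟩ := h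
  have hs₀ : RingQuot.mkAlgHom ℂ (monRel S) (MonoidAlgebra.single s 1) = 0 := by
    simpa using RingQuot.mkAlgHom_rel ℂ
      (show monRel S (MonoidAlgebra.single s 1) 0 from ⟨⟨s, hs, rfl⟩, rfl⟩)
  rw [show MonoidAlgebra.single (a * s * b) c =
      MonoidAlgebra.single a c * MonoidAlgebra.single s 1 * MonoidAlgebra.single b 1 by
    simp [MonoidAlgebra.single_mul_single], map_mul, map_mul, hs₀, mul_zero, zero_mul]

theorem exists_mkAlgHom_monRel_eq_sum {S : Set (FreeMonoid (FreeStarLetter n))}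
    (x : RingQuot (monRel S)) :
    ∃ (T : Finset (FreeMonoid (FreeStarLetter n))) (z : FreeMonoid (FreeStarLetter n) → ℂ),
      (∀ u ∈ T, ¬ HasFactorIn S u) ∧
        RingQuot.mkAlgHom ℂ (monRel S) (∑ u ∈ T, MonoidAlgebra.single u (z u)) = x := by
  classical
  obtain ⟨f, rfl⟩ := RingQuot.mkAlgHom_surjective ℂ (monRel S) x
  refine ⟨{w ∈ f.coeff.support | ¬ HasFactorIn S w}, f.coeff,
    fun u hu => (Finset.mem_filter.1 hu).2, ?_⟩
  have hforb : RingQuot.mkAlgHom ℂ (monRel S)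
      (∑ w ∈ f.coeff.support with HasFactorIn S w, MonoidAlgebra.single w (f.coeff w)) = 0 := by
    rw [map_sum]
    exact Finset.sum_eq_zero fun w hw => mkAlgHom_monRel_single_eq_zero (Finset.mem_filter.1 hw).2 _
  conv_rhs => rw [← MonoidAlgebra.sum_coeff_single f, Finsupp.sum,
    ← Finset.sum_filter_add_sum_filter_not _ (HasFactorIn S), map_add, hforb, zero_add]

/-- the quotient of the free `*`-algebra on `x₁, …, x_n` by the two-sided ideal
generated by a star-closed set `S` of unshrinkable words is O*-representable.  (The quotient
carries the `*`-ring structure inherited from the free `*`-algebra.) -/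
theorem monomial_starAlgebra_oStarRepresentable
    (S : Set (FreeMonoid (FreeStarLetter n)))
    (hstar : ∀ w ∈ S, wordStar w ∈ S)
    (hunshrink : ∀ w ∈ S, Unshrinkable w) :
    @OStarRepresentable (RingQuot (monRel S)) _ _
      (RingQuot.starRing (monRel S) (monRel_star S hstar)).toStarMul.toInvolutiveStar.toStar := by
  let := RingQuot.starRing (monRel S) (monRel_star S hstar)
  have := RingQuot.starModule (R := ℂ) (monRel S) (monRel_star S hstar)
  have hb : 2 * (2 * (n : ℝ) + 1) < 4 * n + 3 := by linarith
  obtain ⟨ψ, hψ⟩ := RingQuot.exists_linearMap_comp_mkAlgHom (monRel S)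
    (weightFunctional S (4 * n + 3)) fun _ _ ⟨⟨s, hs, ha⟩, hzero⟩ x y => by
      rw [ha, hzero, weightFunctional_mul_single_mul hs, mul_zero, zero_mul, map_zero]
  refine OStarRepresentable.of_re_star_mul_self_pos ψ (fun a => ?_) fun a ha => ?_
  · obtain ⟨f, rfl⟩ := RingQuot.mkAlgHom_surjective ℂ (monRel S) a
    rw [RingQuot.mkAlgHom_star, hψ, hψ, weightFunctional_star]
  · obtain ⟨T, z, hT, rfl⟩ := exists_mkAlgHom_monRel_eq_sum a
    rw [RingQuot.mkAlgHom_star, ← map_mul, hψ, weightFunctional_star_sum_mul_sum]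
    refine re_sum_squareWeight_pos hstar hunshrink hb T hT z ?_
    by_contra! hz
    exact ha (by
      rw [Finset.sum_eq_zero fun u hu => by rw [hz u hu, MonoidAlgebra.single_zero], map_zero])

end Stmt17
end
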